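/- (Augmentation Lemma, faithfulness) Let G be an infinite connected graph, H an infinite connected induced subgraph of finite adhesion in G, and K the dominated torso of H in G. If U ⊆ V(H) is dispersed in K, then U is dispersed in G. -/

import Mathlib

/-- A ray in `G`: a one-way infinite path. -/
def IsRay {V : Type*} (G : SimpleGraph V) (f : ℕ → V) : Prop :=
  Function.Injective f ∧ ∀ n, G.Adj (f n) (f (n + 1))

/-- `F` separates `U` from `S` in `G`: every path (walk) from a vertex of `U`
to a vertex of `S` meets `F`. -/
def Separates {V : Type*} (G : SimpleGraph V) (F U S : Set V) : Prop :=
  ∀ u ∈ U, ∀ s ∈ S, ∀ p : G.Walk u s, ∃ x ∈ p.support, x ∈ F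

/-- `U` is dispersed in `G`: every ray can be separated from `U` by a finite vertex set. -/
def Dispersed {V : Type*} (G : SimpleGraph V) (U : Set V) : Prop :=
  ∀ f : ℕ → V, IsRay G f → ∃ F : Set V, F.Finite ∧ Separates G F U (Set.range f)

/-- `v` is reachable from `u` by a walk avoiding `H` entirely. -/
def ReachOutside {V : Type*} (G : SimpleGraph V) (H : Set V) (u v : V) : Prop :=
  ∃ p : G.Walk u v, ∀ x ∈ p.support, x ∉ H

/-- `D` is a connected component of `G − H` (the induced subgraph on `V(G) \ H`). -/
def IsComp {V : Type*} (G : SimpleGraph V) (H D : Set V) : Prop :=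
  D.Nonempty ∧ ∀ u ∈ D, ∀ v : V, (v ∈ D ↔ v ∉ H ∧ ReachOutside G H u v)

/-- The neighborhood `N_G(D)`: vertices outside `D` adjacent in `G` to a vertex of `D`. -/
def nbhdOf {V : Type*} (G : SimpleGraph V) (D : Set V) : Set V :=
  {v | v ∉ D ∧ ∃ d ∈ D, G.Adj v d}

/-- `H` has finite adhesion in `G`: every component of `G − H` has finite neighborhood. -/
def FiniteAdhesion {V : Type*} (G : SimpleGraph V) (H : Set V) : Prop :=
  ∀ D : Set V, IsComp G H D → (nbhdOf G D).Finite

/-- The component of `G − H` containing `u` (for `u ∉ H`). -/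
def compOf {V : Type*} (G : SimpleGraph V) (H : Set V) (u : V) : Set V :=
  {v | v ∉ H ∧ ReachOutside G H u v}

/-- `𝒟′`: components of `G − H` whose adhesion set is shared by only finitely
many components. -/
def Dfin {V : Type*} (G : SimpleGraph V) (H : Set V) : Set (Set V) :=
  {D | IsComp G H D ∧ {D' | IsComp G H D' ∧ nbhdOf G D' = nbhdOf G D}.Finite}

/-- `𝒟″`: components of `G − H` whose adhesion set is shared by infinitely
many components. -/
def Dinf {V : Type*} (G : SimpleGraph V) (H : Set V) : Set (Set V) :=
  {D | IsComp G H D ∧ ¬ {D' | IsComp G H D' ∧ nbhdOf G D' = nbhdOf G D}.Finite}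

/-- `η` is an admissible contraction map: each `D ∈ 𝒟″` is contracted onto a vertex
`η D ∈ N_G(D)`, and for every `D ∈ 𝒟″` the map `η` restricted to the components
sharing the adhesion set `N_G(D)` surjects onto `N_G(D)`. -/
def EtaOK {V : Type*} (G : SimpleGraph V) (H : Set V) (η : Set V → V) : Prop :=
  (∀ D ∈ Dinf G H, η D ∈ nbhdOf G D) ∧
  (∀ D ∈ Dinf G H, ∀ a ∈ nbhdOf G D,
    ∃ D' ∈ Dinf G H, nbhdOf G D' = nbhdOf G D ∧ η D' = a)

open Classical in
/-- The contraction map `ρ` onto the vertex set of the dominated torso: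
vertices of `H` are kept, each `D ∈ 𝒟′` is contracted to the new vertex
`Sum.inr D`, and each `D ∈ 𝒟″` is contracted onto `η D ∈ N_G(D)`. -/
noncomputable def rho {V : Type*} (G : SimpleGraph V) (H : Set V) (η : Set V → V) :
    V → V ⊕ Set V := fun u =>
  if u ∈ H then Sum.inl u
  else if compOf G H u ∈ Dfin G H then Sum.inr (compOf G H u)
  else Sum.inl (η (compOf G H u))

/-- The dominated torso `K` of `H` in `G`: the contraction minor of `G`
witnessed by `ρ`. -/
noncomputable def Torso {V : Type*} (G : SimpleGraph V) (H : Set V) (η : Set V → V) :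
    SimpleGraph (V ⊕ Set V) where
  Adj a b := a ≠ b ∧ ∃ u v : V, rho G H η u = a ∧ rho G H η v = b ∧ G.Adj u v
  symm := by
    constructor
    rintro a b ⟨hne, u, v, hu, hv, huv⟩
    exact ⟨hne.symm, v, u, hv, hu, huv.symm⟩
  loopless := by constructor; rintro a ⟨hne, -⟩; exact hne rfl

/-- The vertex set of the dominated torso. -/
def torsoVerts {V : Type*} (G : SimpleGraph V) (H : Set V) : Set (V ⊕ Set V) :=
  Sum.inl '' H ∪ Sum.inr '' Dfin G H

/-- A tendril in `G`: a ray with infinitely many vertices in `H`. -/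
def IsTendril {V : Type*} (G : SimpleGraph V) (H : Set V) (f : ℕ → V) : Prop :=
  IsRay G f ∧ {n | f n ∈ H}.Infinite

open Classical in
/-- The `H`-masking of a sequence: vertices outside `H` are replaced by their
component of `G − H`. -/
noncomputable def mask {V : Type*} (G : SimpleGraph V) (H : Set V) : V → V ⊕ Set V :=
  fun u => if u ∈ H then Sum.inl u else Sum.inr (compOf G H u)

/-- The indices of a ray kept by the `K`-projection: vertices of `H`, and the
first index of each maximal run of a component `D ∈ 𝒟′`. -/
def keepIdx {V : Type*} (G : SimpleGraph V) (H : Set V) (f : ℕ → V) (n : ℕ) : Prop :=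
  f n ∈ H ∨
    (f n ∉ H ∧ compOf G H (f n) ∈ Dfin G H ∧
      (n = 0 ∨ mask G H (f (n - 1)) ≠ mask G H (f n)))

/-- The `K`-projection of a tendril: maximal runs of a component `D ∈ 𝒟′` are
replaced by the single vertex `v_D`, and terms in components of `𝒟″` are removed. -/
noncomputable def rayProj {V : Type*} (G : SimpleGraph V) (H : Set V) (η : Set V → V)
    (f : ℕ → V) : ℕ → V ⊕ Set V :=
  fun m => rho G H η (f (Nat.nth (keepIdx G H f) m))

/-- `D̂′`: components of `𝒟′` whose contracted vertex lies in `F`. -/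
def DhatFin {V : Type*} (G : SimpleGraph V) (H : Set V) (F : Set (V ⊕ Set V)) :
    Set (Set V) :=
  {D | D ∈ Dfin G H ∧ Sum.inr D ∈ F}

/-- `D̂″`: components `D ∈ 𝒟″` such that some term of the `H`-masking of the
tendril equals `D` and the next vertex of the tendril lies in `F`. -/
def DhatInf {V : Type*} (G : SimpleGraph V) (H : Set V) (f : ℕ → V)
    (F : Set (V ⊕ Set V)) : Set (Set V) :=
  {D | D ∈ Dinf G H ∧ ∃ n : ℕ, f n ∉ H ∧ compOf G H (f n) = D ∧ Sum.inl (f (n + 1)) ∈ F}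

/-- The `S`-modification `F_S` of a set `F ⊆ V(K)`. -/
def Smod {V : Type*} (G : SimpleGraph V) (H : Set V) (f : ℕ → V)
    (F : Set (V ⊕ Set V)) : Set V :=
  (Sum.inl ⁻¹' F ∩ H) ∪ ⋃ D ∈ DhatFin G H F ∪ DhatInf G H f F, nbhdOf G D

/-!
A ray meeting `H` only finitely often ends in one component `D` of `G − H`, and the finite set
`N(D)` cuts it off from `U ⊆ H`. Otherwise replace each vertex `f k` of the ray by a vertex of `K`
representing it: itself if `f k ∈ H`, the vertex `v_D` if `f k` lies in `D ∈ 𝒟′`, and the next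
vertex of the ray in `H`, which lies in `N(D)`, if `D ∈ 𝒟″`. Since `K[N(D)]` is complete for
`D ∈ 𝒟″`, consecutive representatives are equal or adjacent, and by finite adhesion each vertex of
`K` is used only finitely often; so this sequence contains a ray of `K`, and a finite `F ⊆ V(K)`
separating it from `U` also separates `U` from a tail of the sequence. The same completeness lets a
walk of `G` avoiding a finite pullback of `F` be lifted, vertex by vertex, to a walk of `K`
avoiding `F`.
-/

section

open SimpleGraph

variable {V W : Type*}

section Walks

variable {G : SimpleGraph V} {F : Set V} {a b c : V}

theorem ReachOutside.symm (h : ReachOutside G F a b) : ReachOutside G F b a := by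
  obtain ⟨p, hp⟩ := h
  exact ⟨p.reverse, fun x hx => hp x (by simpa using hx)⟩

theorem ReachOutside.trans (h₁ : ReachOutside G F a b) (h₂ : ReachOutside G F b c) :
    ReachOutside G F a c := by
  obtain ⟨p, hp⟩ := h₁
  obtain ⟨q, hq⟩ := h₂
  exact ⟨p.append q, fun x hx => ((Walk.mem_support_append_iff p q).1 hx).elim (hp x) (hq x)⟩

theorem reachOutside_of_eq_or_adj (h : a = b ∨ G.Adj a b) (ha : a ∉ F) (hb : b ∉ F) :
    ReachOutside G F a b := by
  rcases h with rfl | h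
  · exact ⟨Walk.nil, by simpa using ha⟩
  · exact ⟨h.toWalk, by simp [ha, hb]⟩

theorem separates_iff {U S : Set V} :
    Separates G F U S ↔ ∀ u ∈ U, ∀ s ∈ S, ¬ ReachOutside G F u s := by
  simp [Separates, ReachOutside]

theorem exists_mem_support_nbhdOf {D : Set V} (p : G.Walk a b) (ha : a ∉ D) (hb : b ∈ D) :
    ∃ x ∈ p.support, x ∈ nbhdOf G D := by
  obtain ⟨d, hd, hd₁, hd₂⟩ := p.exists_boundary_dart Dᶜ ha (by simpa using hb)
  exact ⟨d.fst, p.dart_fst_mem_support_of_mem_darts hd, hd₁, d.snd, by simpa using hd₂, d.adj⟩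

theorem reachOutside_of_walk {K : SimpleGraph W} {R : W → V → Prop}
    (hR : ∀ {x y w w'}, (x = y ∨ G.Adj x y) → R w x → R w' y → w = w' ∨ K.Adj w w')
    {F : Set W} (p : G.Walk a b) (hp : ∀ y ∈ p.support, ∃ w, R w y ∧ w ∉ F) {wa wb : W}
    (ha : R wa a) (hwa : wa ∉ F) (hb : R wb b) (hwb : wb ∉ F) : ReachOutside K F wa wb := by
  induction p generalizing wa with
  | nil => exact reachOutside_of_eq_or_adj (hR (Or.inl rfl) ha hb) hwa hwb
  | cons hac q ih =>
    obtain ⟨wc, hc, hwc⟩ := hp _ (List.mem_cons_of_mem _ q.start_mem_support)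
    exact (reachOutside_of_eq_or_adj (hR (Or.inr hac) ha hc) hwa hwc).trans
      (ih (fun y hy => hp y (List.mem_cons_of_mem _ hy)) hc hwc hb)

end Walks

section Lazy

variable {K : SimpleGraph W} {w : ℕ → W}

theorem reachOutside_of_lazy (hw : ∀ k, w k = w (k + 1) ∨ K.Adj (w k) (w (k + 1)))
    {F : Set W} {a b : ℕ} (hab : a ≤ b) (hF : ∀ k, a ≤ k → k ≤ b → w k ∉ F) :
    ReachOutside K F (w a) (w b) := by
  induction b, hab using Nat.le_induction with
  | base => exact reachOutside_of_eq_or_adj (Or.inl rfl) (hF a le_rfl le_rfl) (hF a le_rfl le_rfl)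
  | succ b hab ih =>
    exact (ih fun k h₁ h₂ => hF k h₁ (by omega)).trans
      (reachOutside_of_eq_or_adj (hw b) (hF b hab (by omega)) (hF (b + 1) (by omega) le_rfl))

theorem exists_strictMono_isRay_of_lazy (hw : ∀ k, w k = w (k + 1) ∨ K.Adj (w k) (w (k + 1)))
    (hfin : ∀ x, {k | w k = x}.Finite) : ∃ ns : ℕ → ℕ, StrictMono ns ∧ IsRay K (w ∘ ns) := by
  -- the ray jumps from the last visit of a vertex to the next index
  let last : ℕ → ℕ := fun k => sSup {m | w m = w k}
  have w_last : ∀ k, w (last k) = w k := fun k =>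
    Nat.sSup_mem (s := {m | w m = w k}) ⟨k, rfl⟩ (hfin (w k)).bddAbove
  have le_last : ∀ k m, w m = w (last k) → m ≤ last k := fun k m h =>
    le_csSup (hfin (w k)).bddAbove (h.trans (w_last k))
  let ns : ℕ → ℕ := fun j => Nat.rec (last 0) (fun _ n => last (n + 1)) j
  have le_ns : ∀ j m, w m = w (ns j) → m ≤ ns j := by
    rintro (_ | j) m h <;> exact le_last _ m h
  have hmono : StrictMono ns :=
    strictMono_nat_of_lt_succ fun j => le_last (ns j + 1) _ (w_last _).symm
  refine ⟨ns, hmono, fun i j h => hmono.injective (le_antisymm (le_ns j _ h) (le_ns i _ h.symm)),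
    fun j => ?_⟩
  have hne : w (ns j) ≠ w (ns j + 1) := fun h => by have := le_ns j _ h.symm; omega
  simpa only [Function.comp_apply, show w (ns (j + 1)) = w (ns j + 1) from w_last _] using
    (hw (ns j)).resolve_left hne

theorem Dispersed.exists_tail_separator {U : Set W} (hU : Dispersed K U)
    (hw : ∀ k, w k = w (k + 1) ∨ K.Adj (w k) (w (k + 1))) (hfin : ∀ x, {k | w k = x}.Finite) :
    ∃ F : Set W, F.Finite ∧ ∃ N, ∀ n, N ≤ n → w n ∉ F ∧ ∀ u ∈ U, ¬ ReachOutside K F u (w n) := by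
  obtain ⟨ns, hns, hray⟩ := exists_strictMono_isRay_of_lazy hw hfin
  obtain ⟨F, hF, hsep⟩ := hU _ hray
  obtain ⟨B, hB⟩ := (hF.biUnion fun x _ => hfin x).bddAbove
  have hwF : ∀ k, w k ∈ F → k ≤ B := fun k hk => hB (Set.mem_biUnion hk rfl)
  refine ⟨F, hF, B + 1, fun n hn => ⟨fun h => by have := hwF n h; omega, fun u hu hreach => ?_⟩⟩
  have htail : ReachOutside K F (w n) (w (ns n)) :=
    reachOutside_of_lazy hw (hns.id_le n) fun k hk _ h => by have := hwF k h; omega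
  exact separates_iff.1 hsep u hu _ ⟨n, rfl⟩ (hreach.trans htail)

end Lazy

section Torso

variable {G : SimpleGraph V} {H D : Set V} {η : Set V → V} {x y a b : V}

theorem mem_compOf_self (hx : x ∉ H) : x ∈ compOf G H x :=
  ⟨hx, reachOutside_of_eq_or_adj (Or.inl rfl) hx hx⟩

theorem compOf_eq_of_mem (hy : y ∈ compOf G H x) : compOf G H y = compOf G H x := by
  ext z
  exact ⟨fun ⟨hz, h⟩ => ⟨hz, hy.2.trans h⟩, fun ⟨hz, h⟩ => ⟨hz, hy.2.symm.trans h⟩⟩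

theorem compOf_eq_of_adj (h : G.Adj x y) (hx : x ∉ H) (hy : y ∉ H) :
    compOf G H x = compOf G H y :=
  (compOf_eq_of_mem ⟨hy, reachOutside_of_eq_or_adj (Or.inr h) hx hy⟩).symm

theorem isComp_compOf (hx : x ∉ H) : IsComp G H (compOf G H x) :=
  ⟨⟨x, mem_compOf_self hx⟩, fun y hy z => by rw [← compOf_eq_of_mem hy]; rfl⟩

theorem IsComp.notMem (hD : IsComp G H D) (hx : x ∈ D) : x ∉ H :=
  ((hD.2 x hx x).1 hx).1

theorem IsComp.compOf_eq (hD : IsComp G H D) (hx : x ∈ D) : compOf G H x = D := by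
  ext y
  exact (hD.2 x hx y).symm

theorem IsComp.nbhdOf_subset (hD : IsComp G H D) : nbhdOf G D ⊆ H := by
  rintro x ⟨hxD, d, hd, hxd⟩
  by_contra hx
  exact hxD ((hD.2 d hd x).2
    ⟨hx, reachOutside_of_eq_or_adj (Or.inr hxd.symm) (hD.notMem hd) hx⟩)

theorem mem_nbhdOf_compOf (hx : x ∈ H) (hxy : G.Adj x y) (hy : y ∉ H) :
    x ∈ nbhdOf G (compOf G H y) :=
  ⟨fun h => h.1 hx, y, mem_compOf_self hy, hxy⟩

theorem compOf_mem_Dfin_or_Dinf (hx : x ∉ H) :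
    compOf G H x ∈ Dfin G H ∨ compOf G H x ∈ Dinf G H :=
  (em _).imp (fun h => ⟨isComp_compOf hx, h⟩) fun h => ⟨isComp_compOf hx, h⟩

theorem notMem_Dfin_of_mem_Dinf (h : D ∈ Dinf G H) : D ∉ Dfin G H :=
  fun h' => h.2 h'.2

theorem rho_of_mem (hx : x ∈ H) : rho G H η x = Sum.inl x := by
  simp [rho, hx]

theorem rho_of_mem_Dfin (hx : x ∉ H) (hD : compOf G H x ∈ Dfin G H) :
    rho G H η x = Sum.inr (compOf G H x) := by
  simp [rho, hx, hD]

theorem rho_of_mem_Dinf (hx : x ∉ H) (hD : compOf G H x ∈ Dinf G H) :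
    rho G H η x = Sum.inl (η (compOf G H x)) := by
  simp [rho, hx, notMem_Dfin_of_mem_Dinf hD]

theorem rho_eq_or_adj (h : G.Adj x y) :
    rho G H η x = rho G H η y ∨ (Torso G H η).Adj (rho G H η x) (rho G H η y) :=
  (em _).imp_right fun hne => ⟨hne, x, y, rfl, rfl, h⟩

/-- By surjectivity of `η`, `b = η D'` for a component `D'` with `N(D') = N(D)`, and `D'` is
adjacent to `a`. -/
theorem torso_eq_or_adj_of_mem_nbhdOf (hη : EtaOK G H η) (hD : D ∈ Dinf G H)
    (ha : a ∈ nbhdOf G D) (hb : b ∈ nbhdOf G D) :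
    (Sum.inl a : V ⊕ Set V) = Sum.inl b ∨ (Torso G H η).Adj (Sum.inl a) (Sum.inl b) := by
  obtain ⟨D', hD', hN, rfl⟩ := hη.2 D hD b hb
  obtain ⟨-, d, hd, had⟩ : a ∈ nbhdOf G D' := hN ▸ ha
  have hρd : rho G H η d = Sum.inl (η D') := by
    rw [rho_of_mem_Dinf (hD'.1.notMem hd) (hD'.1.compOf_eq hd ▸ hD'), hD'.1.compOf_eq hd]
  simpa only [rho_of_mem (hD.1.nbhdOf_subset ha), hρd] using rho_eq_or_adj (H := H) (η := η) had

end Torso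

/-- A vertex of `K` that `x` may be contracted to: for `x` in `D ∈ 𝒟″` any vertex of `N(D)`,
not only `η D`, since `K[N(D)]` is complete. -/
def TorsoRep (G : SimpleGraph V) (H : Set V) (w : V ⊕ Set V) (x : V) : Prop :=
  (x ∈ H ∧ w = Sum.inl x) ∨
  (x ∉ H ∧ compOf G H x ∈ Dfin G H ∧ w = Sum.inr (compOf G H x)) ∨
  (x ∉ H ∧ compOf G H x ∈ Dinf G H ∧ ∃ a ∈ nbhdOf G (compOf G H x), w = Sum.inl a)

namespace TorsoRep

variable {G : SimpleGraph V} {H : Set V} {η : Set V → V} {w w' : V ⊕ Set V} {x y : V}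

theorem eq_inl (h : TorsoRep G H w x) (hx : x ∈ H) : w = Sum.inl x := by
  rcases h with ⟨-, rfl⟩ | ⟨hx', -⟩ | ⟨hx', -⟩
  · rfl
  all_goals exact absurd hx hx'

theorem of_compOf_eq (h : TorsoRep G H w y) (hx : x ∉ H) (hy : y ∉ H)
    (hxy : compOf G H x = compOf G H y) : TorsoRep G H w x := by
  simpa only [TorsoRep, hx, hy, hxy, false_and, false_or, not_false_eq_true, true_and] using h

theorem eq_or_adj_of_same (hη : EtaOK G H η) (h : TorsoRep G H w x) (h' : TorsoRep G H w' x) :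
    w = w' ∨ (Torso G H η).Adj w w' := by
  by_cases hx : x ∈ H
  · exact Or.inl ((h.eq_inl hx).trans (h'.eq_inl hx).symm)
  simp only [TorsoRep, hx, false_and, false_or, not_false_eq_true, true_and] at h h'
  rcases h with ⟨hD, rfl⟩ | ⟨hD, a, ha, rfl⟩ <;> rcases h' with ⟨hD', rfl⟩ | ⟨hD', b, hb, rfl⟩
  · exact Or.inl rfl
  · exact absurd hD (notMem_Dfin_of_mem_Dinf hD')
  · exact absurd hD' (notMem_Dfin_of_mem_Dinf hD)
  · exact torso_eq_or_adj_of_mem_nbhdOf hη hD ha hb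

theorem eq_or_adj_of_mem (hη : EtaOK G H η) (hx : x ∈ H) (hxy : G.Adj x y)
    (h : TorsoRep G H w y) : Sum.inl x = w ∨ (Torso G H η).Adj (Sum.inl x) w := by
  rcases h with ⟨hy, rfl⟩ | ⟨hy, hD, rfl⟩ | ⟨hy, hD, a, ha, rfl⟩
  · simpa only [rho_of_mem hx, rho_of_mem hy] using rho_eq_or_adj (H := H) (η := η) hxy
  · simpa only [rho_of_mem hx, rho_of_mem_Dfin hy hD] using rho_eq_or_adj (H := H) (η := η) hxy
  · exact torso_eq_or_adj_of_mem_nbhdOf hη hD (mem_nbhdOf_compOf hx hxy hy) ha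

theorem eq_or_adj (hη : EtaOK G H η) (hxy : x = y ∨ G.Adj x y) (h : TorsoRep G H w x)
    (h' : TorsoRep G H w' y) : w = w' ∨ (Torso G H η).Adj w w' := by
  obtain rfl | hxy := hxy
  · exact h.eq_or_adj_of_same hη h'
  by_cases hx : x ∈ H
  · rw [h.eq_inl hx]
    exact h'.eq_or_adj_of_mem hη hx hxy
  by_cases hy : y ∈ H
  · rw [h'.eq_inl hy]
    exact (h.eq_or_adj_of_mem hη hy hxy.symm).imp Eq.symm Adj.symm
  · exact h.eq_or_adj_of_same hη (h'.of_compOf_eq hx hy (compOf_eq_of_adj hxy hx hy))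

end TorsoRep

section Pullback

variable {G : SimpleGraph V} {H : Set V} {F : Set (V ⊕ Set V)}

def separatorPullback (G : SimpleGraph V) (H : Set V) (F : Set (V ⊕ Set V)) : Set V :=
  (Sum.inl ⁻¹' F ∩ H) ∪ ⋃ D ∈ DhatFin G H F, nbhdOf G D

theorem separatorPullback_finite (hadh : FiniteAdhesion G H) (hF : F.Finite) :
    (separatorPullback G H F).Finite :=
  ((hF.preimage Sum.inl_injective.injOn).inter_of_left H).union <|
    ((hF.preimage Sum.inr_injective.injOn).subset fun _ hD => hD.2).biUnion
      fun D hD => hadh D hD.1.1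

theorem exists_torsoRep_notMem {u y : V} (hu : u ∈ H) (p : G.Walk u y)
    (hp : ∀ z ∈ p.support, z ∉ separatorPullback G H F) : ∃ w, TorsoRep G H w y ∧ w ∉ F := by
  by_cases hy : y ∈ H
  · exact ⟨_, Or.inl ⟨hy, rfl⟩, fun h => hp y p.end_mem_support (Or.inl ⟨h, hy⟩)⟩
  have hD := isComp_compOf (G := G) hy
  obtain ⟨z, hz, hzN⟩ :=
    exists_mem_support_nbhdOf p (fun h => hD.notMem h hu) (mem_compOf_self hy)
  rcases compOf_mem_Dfin_or_Dinf hy with hfin | hinf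
  · exact ⟨_, Or.inr (Or.inl ⟨hy, hfin, rfl⟩),
      fun h => hp z hz (Or.inr (Set.mem_biUnion (show _ ∈ DhatFin G H F from ⟨hfin, h⟩) hzN))⟩
  · exact ⟨_, Or.inr (Or.inr ⟨hy, hinf, z, hzN, rfl⟩),
      fun h => hp z hz (Or.inl ⟨h, hD.nbhdOf_subset hzN⟩)⟩

end Pullback

section Rays

variable {G : SimpleGraph V} {H : Set V} {f : ℕ → V} {k : ℕ}

theorem mem_compOf_of_forall_notMem (hf : IsRay G f) {m : ℕ} (hkm : k ≤ m)
    (hH : ∀ j, k ≤ j → j ≤ m → f j ∉ H) : f m ∈ compOf G H (f k) := by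
  induction m, hkm using Nat.le_induction with
  | base => exact mem_compOf_self (hH k le_rfl le_rfl)
  | succ m hkm ih =>
    have ih := ih fun j h₁ h₂ => hH j h₁ (by omega)
    have hm : f (m + 1) ∉ H := hH _ (by omega) le_rfl
    exact ⟨hm, ih.2.trans (reachOutside_of_eq_or_adj (Or.inr (hf.2 m)) ih.1 hm)⟩

theorem exists_finite_separates_range_of_finite (hadh : FiniteAdhesion G H) {U : Set V}
    (hUH : U ⊆ H) (hf : IsRay G f) (hfin : {n | f n ∈ H}.Finite) :
    ∃ F : Set V, F.Finite ∧ Separates G F U (Set.range f) := by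
  obtain ⟨B, hB⟩ := hfin.bddAbove
  have hout : ∀ j, B < j → f j ∉ H := fun j hj h => (hB h).not_gt hj
  have hD := isComp_compOf (G := G) (hout (B + 1) (by omega))
  refine ⟨nbhdOf G (compOf G H (f (B + 1))) ∪ f '' Set.Iic B,
    (hadh _ hD).union ((Set.finite_Iic B).image f), ?_⟩
  rintro u hu _ ⟨n, rfl⟩ p
  by_cases hn : n ≤ B
  · exact ⟨f n, p.end_mem_support, Or.inr ⟨n, hn, rfl⟩⟩
  obtain ⟨z, hz, hzN⟩ := exists_mem_support_nbhdOf p (fun h => hD.notMem h (hUH hu))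
    (mem_compOf_of_forall_notMem hf (by omega : B + 1 ≤ n) fun j hj _ => hout j (by omega))
  exact ⟨z, hz, Or.inl hzN⟩

/-- Junk value `0` when `f` does not meet `H` from `k` on. -/
noncomputable def nextHit (f : ℕ → V) (H : Set V) (k : ℕ) : ℕ :=
  sInf {j | k ≤ j ∧ f j ∈ H}

theorem nextHit_spec (hinf : {n | f n ∈ H}.Infinite) (k : ℕ) :
    k ≤ nextHit f H k ∧ f (nextHit f H k) ∈ H :=
  let ⟨j, hj, hkj⟩ := hinf.exists_gt k
  Nat.sInf_mem (s := {j | k ≤ j ∧ f j ∈ H}) ⟨j, hkj.le, hj⟩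

theorem nextHit_of_mem (hk : f k ∈ H) : nextHit f H k = k :=
  le_antisymm (Nat.sInf_le ⟨le_rfl, hk⟩)
    (Nat.sInf_mem (s := {j | k ≤ j ∧ f j ∈ H}) ⟨k, le_rfl, hk⟩).1

theorem notMem_of_lt_nextHit {j : ℕ} (hkj : k ≤ j) (hj : j < nextHit f H k) : f j ∉ H :=
  fun h => Nat.notMem_of_lt_sInf hj ⟨hkj, h⟩

theorem nextHit_mem_nbhdOf (hf : IsTendril G H f) (hk : f k ∉ H) :
    f (nextHit f H k) ∈ nbhdOf G (compOf G H (f k)) := by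
  obtain ⟨hle, hmem⟩ := nextHit_spec hf.2 k
  have hlt : k < nextHit f H k := hle.lt_of_ne fun h => hk (h ▸ hmem)
  obtain ⟨m, hm⟩ := Nat.exists_eq_add_one_of_ne_zero hlt.ne_bot
  rw [hm] at hmem hlt ⊢
  refine ⟨fun h => h.1 hmem, f m, mem_compOf_of_forall_notMem hf.1 (by omega) fun j h₁ h₂ =>
    notMem_of_lt_nextHit h₁ (by omega), (hf.1.2 m).symm⟩

theorem finite_setOf_nextHit_mem (hf : IsTendril G H f) {T : Set V} (hT : T.Finite) :
    {k | f (nextHit f H k) ∈ T}.Finite := by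
  obtain ⟨B, hB⟩ := (hT.preimage hf.1.1.injOn).bddAbove
  exact (Set.finite_Iic B).subset fun k hk => (nextHit_spec hf.2 k).1.trans (hB hk)

open Classical in
/-- For `f k` in `D ∈ 𝒟″` this is the vertex of `N(D)` at which the ray next returns to `H`
rather than `η D`: that keeps every vertex of `K` the image of only finitely many indices. -/
noncomputable def torsoTrace (G : SimpleGraph V) (H : Set V) (f : ℕ → V) (k : ℕ) : V ⊕ Set V :=
  if f k ∉ H ∧ compOf G H (f k) ∈ Dfin G H then Sum.inr (compOf G H (f k))
  else Sum.inl (f (nextHit f H k))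

theorem torsoRep_torsoTrace (hf : IsTendril G H f) (k : ℕ) :
    TorsoRep G H (torsoTrace G H f k) (f k) := by
  by_cases hk : f k ∈ H
  · exact Or.inl ⟨hk, by simp [torsoTrace, hk, nextHit_of_mem hk]⟩
  rcases compOf_mem_Dfin_or_Dinf hk with hD | hD
  · exact Or.inr (Or.inl ⟨hk, hD, by simp [torsoTrace, hk, hD]⟩)
  · exact Or.inr (Or.inr ⟨hk, hD, _, nextHit_mem_nbhdOf hf hk,
      by simp [torsoTrace, notMem_Dfin_of_mem_Dinf hD]⟩)

theorem finite_setOf_torsoTrace_eq (hadh : FiniteAdhesion G H) (hf : IsTendril G H f)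
    (x : V ⊕ Set V) : {k | torsoTrace G H f k = x}.Finite := by
  rcases x with a | D
  · refine (finite_setOf_nextHit_mem hf (Set.finite_singleton a)).subset fun k hk => ?_
    simp only [torsoTrace, Set.mem_ofPred_eq] at hk
    split_ifs at hk
    exact Sum.inl_injective hk
  · rcases Set.eq_empty_or_nonempty {k | torsoTrace G H f k = Sum.inr D} with h | ⟨k₀, hk₀⟩
    · simp [h]
    have hcomp : ∀ {k}, torsoTrace G H f k = Sum.inr D → f k ∉ H ∧ compOf G H (f k) = D := by
      intro k hk
      simp only [torsoTrace] at hk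
      split_ifs at hk with h
      exact ⟨h.1, Sum.inr_injective hk⟩
    obtain ⟨hk₀H, rfl⟩ := hcomp hk₀
    refine (finite_setOf_nextHit_mem hf (hadh _ (isComp_compOf hk₀H))).subset fun k hk => ?_
    obtain ⟨hkH, hkD⟩ := hcomp hk
    exact hkD ▸ nextHit_mem_nbhdOf hf hkH

end Rays

end

theorem torso_faithful_general {V : Type*} (G : SimpleGraph V) (H : Set V) (η : Set V → V)
    (hadh : FiniteAdhesion G H) (hη : EtaOK G H η)
    (U : Set V) (hUH : U ⊆ H)
    (hU : Dispersed (Torso G H η) (Sum.inl '' U)) :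
    Dispersed G U := by
  classical
  intro f hf
  by_cases hfin : {n | f n ∈ H}.Finite
  · exact exists_finite_separates_range_of_finite hadh hUH hf hfin
  have hT : IsTendril G H f := ⟨hf, hfin⟩
  obtain ⟨F, hF, N, hN⟩ := hU.exists_tail_separator
    (fun k => (torsoRep_torsoTrace hT k).eq_or_adj hη (Or.inr (hf.2 k)) (torsoRep_torsoTrace hT _))
    (finite_setOf_torsoTrace_eq hadh hT)
  refine ⟨separatorPullback G H F ∪ f '' Set.Iio N,
    (separatorPullback_finite hadh hF).union ((Set.finite_Iio N).image f), separates_iff.2 ?_⟩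
  rintro u hu _ ⟨n, rfl⟩ ⟨p, hp⟩
  have hn : N ≤ n := not_lt.1 fun hn => hp _ p.end_mem_support (Or.inr ⟨n, hn, rfl⟩)
  have hpF : ∀ z ∈ p.support, z ∉ separatorPullback G H F := fun z hz h => hp z hz (Or.inl h)
  have hlift : ∀ y ∈ p.support, ∃ w, TorsoRep G H w y ∧ w ∉ F := fun y hy =>
    exists_torsoRep_notMem (hUH hu) (p.takeUntil y hy) fun z hz =>
      hpF z (p.support_takeUntil_subset_support hy hz)
  exact (hN n hn).2 _ ⟨u, hu, rfl⟩ <|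
    reachOutside_of_walk (fun hxy h h' => h.eq_or_adj hη hxy h') p hlift
      (Or.inl ⟨hUH hu, rfl⟩) (fun h => hpF u p.start_mem_support (Or.inl ⟨h, hUH hu⟩))
      (torsoRep_torsoTrace hT n) (hN n hn).1

/-- Augmentation Lemma (faithfulness): if `U ⊆ V(H)` is dispersed in the dominated
torso `K` of `H` in `G`, then `U` is dispersed in `G`. -/
theorem torso_faithful {V : Type*} (G : SimpleGraph V) (H : Set V) (η : Set V → V)
    (hVinf : Infinite V) (hG : G.Connected)
    (hHinf : H.Infinite) (hHconn : (G.induce H).Connected)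
    (hadh : FiniteAdhesion G H) (hη : EtaOK G H η)
    (U : Set V) (hUH : U ⊆ H)
    (hU : Dispersed (Torso G H η) (Sum.inl '' U)) :
    Dispersed G U :=
  torso_faithful_general G H η hadh hη U hUH hU
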